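/- arXiv:1501.07501 — 3 statements merged into one kernel-verified Lean document; each statement's English description precedes it below -/
import Mathlib

section
/- Let η : [t, L] → ℝ be C², strictly increasing with η' > 0 on [t, L], and let k : [0, η(L) - η(t)] → (0,∞) be defined by k(u) = 1/((y(u)-b)(y(u)-a) η'(y(u))) where y is the inverse of u ↦ η(y) - η(t) and a < b < t. Assume k is monotone decreasing and |k'(ũ)| ≤ C k(0) (t-b)^{-3/2} for all ũ in the domain. Then ∫_t^L e^{-Nη(y)} / ((y-b)(y-a)) dy = (e^{-Nη(t)} / (N (t-b)(t-a) η'(t))) · (1 + O(1/(N(t-b)^{3/2})) + O(N e^{-N(η(L)-η(t))})) as N → ∞. -/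
open MeasureTheory Set Real Filter

lemma aux_exp_int (c M : ℝ) (hc : 0 < c) :
    ∫ u in (0:ℝ)..M, Real.exp (-(c*u)) = (1 - Real.exp (-(c*M)))/c := by
  have h : ∀ u ∈ uIcc (0:ℝ) M, HasDerivAt (fun v => -Real.exp (-(c*v))/c) (Real.exp (-(c*u))) u := by
    intro u _
    have h1 : HasDerivAt (fun v : ℝ => -(c*v)) (-c) u := by
      have h0 := ((hasDerivAt_id u).const_mul c).neg
      rw [mul_one] at h0
      exact h0
    have h2 := (h1.exp.neg).div_const c
    refine h2.congr_deriv ?_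
    rw [div_eq_iff hc.ne']; ring
  rw [intervalIntegral.integral_eq_sub_of_hasDerivAt h
    (Continuous.intervalIntegrable (by continuity) _ _)]
  field_simp
  simp only [mul_zero, neg_zero, Real.exp_zero]; ring

lemma aux_uexp_int (c M : ℝ) (hc : 0 < c) (hM : 0 ≤ M) :
    ∫ u in (0:ℝ)..M, u * Real.exp (-(c*u)) ≤ 4/c^2 := by
  have hpt : ∀ u ∈ Icc (0:ℝ) M, u * Real.exp (-(c*u)) ≤ (2/c) * Real.exp (-(c/2*u)) := by
    intro u hu
    have h1 : c/2*u ≤ Real.exp (c/2*u) := by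
      have := Real.add_one_le_exp (c/2*u)
      nlinarith [Real.exp_pos (c/2*u)]
    have h2 : u ≤ 2/c * Real.exp (c/2*u) := by
      rw [div_mul_eq_mul_div, le_div_iff₀ hc]
      linarith
    calc u * Real.exp (-(c*u)) ≤ (2/c * Real.exp (c/2*u)) * Real.exp (-(c*u)) :=
          mul_le_mul_of_nonneg_right h2 (Real.exp_pos _).le
      _ = (2/c) * Real.exp (-(c/2*u)) := by
          rw [mul_assoc, ← Real.exp_add]; ring_nf
  have hint : ∫ u in (0:ℝ)..M, (2/c) * Real.exp (-(c/2*u)) = (2/c) * ((1 - Real.exp (-(c/2*M)))/(c/2)) := by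
    rw [intervalIntegral.integral_const_mul, aux_exp_int (c/2) M (by linarith)]
  have hmono : ∫ u in (0:ℝ)..M, u * Real.exp (-(c*u)) ≤ ∫ u in (0:ℝ)..M, (2/c) * Real.exp (-(c/2*u)) := by
    apply intervalIntegral.integral_mono_on hM
    · exact (Continuous.intervalIntegrable (by continuity) _ _)
    · exact (Continuous.intervalIntegrable (by continuity) _ _)
    · exact hpt
  refine hmono.trans ?_
  rw [hint]
  have he : Real.exp (-(c/2*M)) ≤ 1 := Real.exp_le_one_iff.2 (by nlinarith)
  have he2 : 0 < Real.exp (-(c/2*M)) := Real.exp_pos _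
  calc 2/c * ((1 - Real.exp (-(c/2*M)))/(c/2)) = (4*(1 - Real.exp (-(c/2*M))))/c^2 := by
        field_simp; ring
    _ ≤ 4/c^2 := by gcongr; linarith

lemma aux_mvt (f : ℝ → ℝ) (x0 x1 B : ℝ) (h01 : x0 < x1) (hc : ContinuousOn f (Icc x0 x1))
    (hd : DifferentiableOn ℝ f (Ioo x0 x1)) (hB : ∀ c ∈ Ioo x0 x1, |deriv f c| ≤ B) :
    |f x1 - f x0| ≤ B * (x1 - x0) := by
  obtain ⟨c, hcmem, heq⟩ := exists_deriv_eq_slope f h01 hc hd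
  have : f x1 - f x0 = deriv f c * (x1 - x0) := by
    rw [heq, div_mul_cancel₀]
    exact sub_ne_zero.2 h01.ne'
  rw [this, abs_mul, abs_of_pos (by linarith : (0:ℝ) < x1 - x0)]
  exact mul_le_mul_of_nonneg_right (hB c hcmem) (by linarith)

lemma aux_main (E Nr tb ta d : ℝ) (hN : Nr ≠ 0) (htb : tb ≠ 0) (hta : ta ≠ 0) (hd : d ≠ 0) :
    E / (Nr*tb*ta*d) = E * ((1/(tb*ta*d))/Nr) := by
  field_simp

lemma aux_alg (k0 eN P C C' Nr : ℝ) (hk0 : 0 < k0) (heN : 0 < eN) (hP : 0 < P)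
    (hN1 : 1 ≤ Nr) (hC'1 : 1 ≤ C') (hC'2 : 4*C ≤ C') :
    k0 * eN/Nr + (C*k0*P⁻¹) * (4/Nr^2) ≤ (k0/Nr) * (C'/(Nr*P) + C'*Nr*eN) := by
  have hN0 : (0:ℝ) < Nr := by linarith
  have h1 : (k0/Nr) * (C'/(Nr*P) + C'*Nr*eN) = C'*k0/(Nr^2*P) + C'*k0*eN := by
    field_simp
  rw [h1]
  have h2 : k0 * eN/Nr ≤ C'*k0*eN := by
    rw [div_le_iff₀ hN0]
    have hone : (1:ℝ) ≤ C'*Nr := by nlinarith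
    nlinarith [mul_pos hk0 heN]
  have h3 : (C*k0*P⁻¹) * (4/Nr^2) = 4*C*k0/(Nr^2*P) := by
    field_simp
  have h4 : 4*C*k0/(Nr^2*P) ≤ C'*k0/(Nr^2*P) := by
    gcongr
  linarith

/-- Laplace-type asymptotics for `∫_t^L e^{-Nη(y)}/((y-b)(y-a)) dy`. -/
theorem laplace_asymptotics
    (a b t L : ℝ) (hab : a < b) (hbt : b < t) (htL : t < L)
    (η : ℝ → ℝ) (hη : ContDiffOn ℝ 2 η (Icc t L))
    (hηmono : StrictMonoOn η (Icc t L))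
    (hη' : ∀ x ∈ Icc t L, 0 < deriv η x)
    (y : ℝ → ℝ) (hy0 : y 0 = t)
    (hymem : ∀ u ∈ Icc 0 (η L - η t), y u ∈ Icc t L)
    (hyinv : ∀ u ∈ Icc 0 (η L - η t), η (y u) = η t + u)
    (k : ℝ → ℝ)
    (hk : ∀ u ∈ Icc 0 (η L - η t),
      k u = 1 / ((y u - b) * (y u - a) * deriv η (y u)))
    (hkpos : ∀ u ∈ Icc 0 (η L - η t), 0 < k u)
    (hkmono : AntitoneOn k (Icc 0 (η L - η t)))
    (C : ℝ) (hC : 0 < C)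
    (hk' : ∀ u ∈ Icc 0 (η L - η t), |deriv k u| ≤ C * k 0 * (t - b) ^ (-(3:ℝ)/2)) :
    ∃ C' > 0, ∃ N₀ : ℕ, ∀ N : ℕ, N₀ ≤ N →
      |(∫ x in t..L, Real.exp (-(N:ℝ) * η x) / ((x - b) * (x - a)))
          - Real.exp (-(N:ℝ) * η t) / ((N:ℝ) * (t - b) * (t - a) * deriv η t)|
        ≤ (Real.exp (-(N:ℝ) * η t) / ((N:ℝ) * (t - b) * (t - a) * deriv η t))
          * (C' / ((N:ℝ) * (t - b) ^ ((3:ℝ)/2))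
             + C' * (N:ℝ) * Real.exp (-(N:ℝ) * (η L - η t))) := by
  set M : ℝ := η L - η t with hMdef
  have htmem : t ∈ Icc t L := ⟨le_refl t, htL.le⟩
  have hLmem : L ∈ Icc t L := ⟨htL.le, le_refl L⟩
  have hM : 0 < M := sub_pos.2 (hηmono htmem hLmem htL)
  have h0mem : (0:ℝ) ∈ Icc 0 M := ⟨le_refl 0, hM.le⟩
  have hMmem : M ∈ Icc 0 M := ⟨hM.le, le_refl M⟩
  have hinj : InjOn η (Icc t L) := hηmono.injOn
  have hyM : y M = L := by
    apply hinj (hymem M hMmem) hLmem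
    rw [hyinv M hMmem]; ring
  -- differentiability of η at points of Icc
  have hdiffAt : ∀ x ∈ Icc t L, DifferentiableAt ℝ η x := by
    intro x hx
    by_contra h
    have := hη' x hx
    rw [deriv_zero_of_not_differentiableAt h] at this
    exact lt_irrefl 0 this
  have hudiff : UniqueDiffOn ℝ (Icc t L) := uniqueDiffOn_Icc htL
  have hderiv_eq : ∀ x ∈ Icc t L, derivWithin η (Icc t L) x = deriv η x :=
    fun x hx => (hdiffAt x hx).derivWithin (hudiff x hx)
  have hderiv_cont : ContinuousOn (deriv η) (Icc t L) :=
    (hη.continuousOn_derivWithin hudiff one_le_two).congr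
      (fun x hx => (hderiv_eq x hx).symm)
  -- y strictly monotone, surjective, continuous
  have hymono : StrictMonoOn y (Icc 0 M) := by
    intro u1 h1 u2 h2 h12
    by_contra h
    push_neg at h
    have : η (y u2) ≤ η (y u1) := hηmono.monotoneOn (hymem u2 h2) (hymem u1 h1) h
    rw [hyinv u1 h1, hyinv u2 h2] at this
    linarith
  have hysurj : SurjOn y (Icc 0 M) (Icc t L) := by
    intro x hx
    refine ⟨η x - η t, ⟨sub_nonneg.2 (hηmono.monotoneOn htmem hx hx.1), sub_le_sub_right (hηmono.monotoneOn hx hLmem hx.2) _⟩, ?_⟩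
    have hmem : η x - η t ∈ Icc 0 M :=
      ⟨sub_nonneg.2 (hηmono.monotoneOn htmem hx hx.1), sub_le_sub_right (hηmono.monotoneOn hx hLmem hx.2) _⟩
    exact hinj (hymem _ hmem) hx (by rw [hyinv _ hmem]; ring)
  have himg : y '' (Icc 0 M) = Icc t L :=
    Subset.antisymm (image_subset_iff.2 hymem) hysurj
  have hyIoo : ∀ u ∈ Ioo 0 M, y u ∈ Ioo t L := by
    intro u hu
    constructor
    · rw [← hy0]; exact hymono h0mem ⟨hu.1.le, hu.2.le⟩ hu.1
    · rw [← hyM]; exact hymono ⟨hu.1.le, hu.2.le⟩ hMmem hu.2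
  have hycont : ContinuousOn y (Icc 0 M) := by
    intro u hu
    rcases eq_or_lt_of_le hu.1 with h0 | h0
    · -- u = 0
      apply ContinuousWithinAt.mono _ (Icc_subset_Ici_self)
      rw [← h0]
      apply hymono.continuousWithinAt_right_of_image_mem_nhdsWithin
      · exact Icc_mem_nhdsGE_of_mem ⟨le_refl 0, hM⟩
      · rw [himg, hy0]
        exact Icc_mem_nhdsGE_of_mem ⟨le_refl t, htL⟩
    rcases eq_or_lt_of_le hu.2 with hMu | hMu
    · -- u = M
      apply ContinuousWithinAt.mono _ (Icc_subset_Iic_self)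
      rw [hMu]
      apply hymono.continuousWithinAt_left_of_image_mem_nhdsWithin
      · exact Icc_mem_nhdsLE_of_mem ⟨hM, le_refl M⟩
      · rw [himg, hyM]
        exact Icc_mem_nhdsLE_of_mem ⟨htL, le_refl L⟩
    · -- interior
      apply ContinuousAt.continuousWithinAt
      apply hymono.continuousAt_of_image_mem_nhds (Icc_mem_nhds h0 hMu)
      rw [himg]
      exact Icc_mem_nhds (hyIoo u ⟨h0, hMu⟩).1 (hyIoo u ⟨h0, hMu⟩).2
  -- derivative of y at interior points
  have hyderiv : ∀ u ∈ Ioo 0 M, HasDerivAt y (deriv η (y u))⁻¹ u := by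
    intro u hu
    have hyu : y u ∈ Icc t L := hymem u ⟨hu.1.le, hu.2.le⟩
    have hfd : HasDerivAt (fun v => η v - η t) (deriv η (y u)) (y u) :=
      ((hdiffAt _ hyu).hasDerivAt).sub_const (η t)
    have hcont : ContinuousAt y u :=
      (hycont u ⟨hu.1.le, hu.2.le⟩).continuousAt (Icc_mem_nhds hu.1 hu.2)
    have hev : ∀ᶠ x in nhds u, η (y x) - η t = x := by
      filter_upwards [Icc_mem_nhds hu.1 hu.2] with x hx
      rw [hyinv x hx]; ring
    exact HasDerivAt.of_local_left_inverse hcont hfd (ne_of_gt (hη' _ hyu)) hev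
  -- continuity of k
  have hden : ∀ u ∈ Icc 0 M, 0 < (y u - b) * (y u - a) * deriv η (y u) := by
    intro u hu
    have h1 := (hymem u hu).1
    have := hη' _ (hymem u hu)
    have hb' : 0 < y u - b := by linarith
    have ha' : 0 < y u - a := by linarith
    positivity
  have hdencont : ContinuousOn (fun u => (y u - b) * (y u - a) * deriv η (y u)) (Icc 0 M) := by
    have h1 : ContinuousOn (fun u => deriv η (y u)) (Icc 0 M) :=
      hderiv_cont.comp hycont hymem
    exact ((hycont.sub continuousOn_const).mul (hycont.sub continuousOn_const)).mul h1
  have hkcont : ContinuousOn k (Icc 0 M) := by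
    apply ContinuousOn.congr (f := fun u => 1 / ((y u - b) * (y u - a) * deriv η (y u)))
    · exact continuousOn_const.div hdencont (fun u hu => (hden u hu).ne')
    · exact fun u hu => hk u hu
  -- differentiability of k on the interior
  have hkdiff : ∀ u ∈ Ioo 0 M, DifferentiableAt ℝ k u := by
    intro u hu
    have huIcc : u ∈ Icc 0 M := ⟨hu.1.le, hu.2.le⟩
    have hnhds : Icc 0 M ∈ nhds u := Icc_mem_nhds hu.1 hu.2
    have hydiffAt : DifferentiableAt ℝ y u := (hyderiv u hu).differentiableAt
    have hd2 : DifferentiableAt ℝ (deriv η) (y u) := by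
      have h1 : ContDiffOn ℝ 1 (deriv η) (Ioo t L) :=
        (hη.mono Ioo_subset_Icc_self).deriv_of_isOpen isOpen_Ioo (by norm_num)
      have h2 := (h1.differentiableOn one_ne_zero) (y u) (hyIoo u hu)
      exact h2.differentiableAt (isOpen_Ioo.mem_nhds (hyIoo u hu))
    have hgdiff : DifferentiableAt ℝ (fun v => 1 / ((y v - b) * (y v - a) * deriv η (y v))) u := by
      have hcomp : DifferentiableAt ℝ (fun v => deriv η (y v)) u := hd2.comp u hydiffAt
      have hdd : DifferentiableAt ℝ (fun v => (y v - b) * (y v - a) * deriv η (y v)) u :=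
        (((hydiffAt.sub_const b).mul (hydiffAt.sub_const a)).mul hcomp)
      exact (differentiableAt_const 1).div hdd (hden u huIcc).ne'
    have hev : k =ᶠ[nhds u] (fun v => 1 / ((y v - b) * (y v - a) * deriv η (y v))) := by
      filter_upwards [hnhds] with v hv
      exact hk v hv
    exact (Filter.EventuallyEq.differentiableAt_iff hev).2 hgdiff
  -- key MVT bound
  have hkey : ∀ u ∈ Icc 0 M, k 0 - k u ≤ (C * k 0 * (t - b) ^ (-(3:ℝ)/2)) * u := by
    intro u hu
    rcases eq_or_lt_of_le hu.1 with h0 | h0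
    · rw [← h0]; simp
    · have hm := aux_mvt k 0 u (C * k 0 * (t - b) ^ (-(3:ℝ)/2)) h0
        (hkcont.mono (Icc_subset_Icc le_rfl hu.2))
        (fun v hv => (hkdiff v ⟨hv.1, lt_of_lt_of_le hv.2 hu.2⟩).differentiableWithinAt)
        (fun v hv => hk' v ⟨hv.1.le, hv.2.le.trans hu.2⟩)
      have h2 : k 0 - k u ≤ |k u - k 0| := by rw [abs_sub_comm]; exact le_abs_self _
      calc k 0 - k u ≤ |k u - k 0| := h2
        _ ≤ (C * k 0 * (t - b) ^ (-(3:ℝ)/2)) * (u - 0) := hm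
        _ = (C * k 0 * (t - b) ^ (-(3:ℝ)/2)) * u := by ring
  have hkIcc : ∀ u ∈ Icc 0 M, k u ≤ k 0 := fun u hu => hkmono h0mem hu hu.1
  -- image of η
  have himg2 : η '' (Icc t L) = Icc (η t) (η L) := by
    apply Subset.antisymm
    · rintro _ ⟨x, hx, rfl⟩
      exact ⟨hηmono.monotoneOn htmem hx hx.1, hηmono.monotoneOn hx hLmem hx.2⟩
    · exact intermediate_value_Icc htL.le hη.continuousOn
  -- substitution
  have hsub : ∀ N : ℕ, (∫ x in t..L, Real.exp (-(N:ℝ) * η x) / ((x - b) * (x - a)))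
      = Real.exp (-(N:ℝ) * η t) * ∫ u in (0:ℝ)..M, Real.exp (-((N:ℝ)*u)) * k u := by
    intro N
    have huIcc : uIcc t L = Icc t L := uIcc_of_le htL.le
    have hg : ContinuousOn (fun v => Real.exp (-((N:ℝ)*v)) * k (v - η t)) (η '' (uIcc t L)) := by
      rw [huIcc, himg2]
      apply ContinuousOn.mul
      · exact (Real.continuous_exp.comp (continuous_const.mul continuous_id).neg).continuousOn
      · apply hkcont.comp (continuousOn_id.sub continuousOn_const)
        intro v hv
        exact ⟨sub_nonneg.2 hv.1, sub_le_sub_right hv.2 _⟩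
    have heq := intervalIntegral.integral_comp_smul_deriv' (f := η) (f' := deriv η)
      (g := fun v => Real.exp (-((N:ℝ)*v)) * k (v - η t))
      (fun x hx => (hdiffAt x (huIcc ▸ hx)).hasDerivAt) (huIcc ▸ hderiv_cont) hg
    have hLHS : (∫ x in t..L, Real.exp (-(N:ℝ) * η x) / ((x - b) * (x - a)))
        = ∫ x in t..L, deriv η x • (fun v => Real.exp (-((N:ℝ)*v)) * k (v - η t)) (η x) := by
      apply intervalIntegral.integral_congr
      intro x hx
      rw [huIcc] at hx
      have hu : η x - η t ∈ Icc 0 M :=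
        ⟨sub_nonneg.2 (hηmono.monotoneOn htmem hx hx.1), sub_le_sub_right (hηmono.monotoneOn hx hLmem hx.2) _⟩
      have hyx : y (η x - η t) = x := hinj (hymem _ hu) hx (by rw [hyinv _ hu]; ring)
      have hkx : k (η x - η t) = 1/((x - b)*(x - a)*deriv η x) := by rw [hk _ hu, hyx]
      simp only [smul_eq_mul]
      rw [hkx]
      have h1 : (0:ℝ) < x - b := by have := hx.1; linarith
      have h2 : (0:ℝ) < x - a := by have := hx.1; linarith
      have h3 : deriv η x ≠ 0 := (hη' x hx).ne'
      rw [neg_mul]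
      field_simp
    simp only [Function.comp] at heq
    rw [hLHS, heq]
    have hshift := intervalIntegral.integral_comp_sub_right
      (fun u => Real.exp (-((N:ℝ)*(u + η t))) * k u) (η t) (a := η t) (b := η L)
    have hL2 : (∫ v in (η t)..(η L), Real.exp (-((N:ℝ)*v)) * k (v - η t))
        = ∫ v in (η t)..(η L), Real.exp (-((N:ℝ)*((v - η t) + η t))) * k (v - η t) := by
      apply intervalIntegral.integral_congr
      intro v _
      norm_num
    rw [hL2, hshift, sub_self]
    have hL3 : (∫ u in (0:ℝ)..(η L - η t), Real.exp (-((N:ℝ)*(u + η t))) * k u)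
        = ∫ u in (0:ℝ)..M, Real.exp (-((N:ℝ) * η t)) * (Real.exp (-((N:ℝ)*u)) * k u) := by
      apply intervalIntegral.integral_congr
      intro u _
      simp only
      rw [← mul_assoc, ← Real.exp_add]
      ring_nf
    rw [hL3, intervalIntegral.integral_const_mul, neg_mul]
  -- basic constants
  have hk0 : 0 < k 0 := hkpos 0 h0mem
  have htb : (0:ℝ) < t - b := by linarith
  have hta : (0:ℝ) < t - a := by linarith
  have hdt : 0 < deriv η t := hη' t htmem
  have hk0eq : k 0 = 1 / ((t - b) * (t - a) * deriv η t) := by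
    have h := hk 0 h0mem; rwa [hy0] at h
  set P : ℝ := (t - b) ^ ((3:ℝ)/2) with hP
  have hPpos : 0 < P := Real.rpow_pos_of_pos htb _
  have hrpow : (t - b) ^ (-(3:ℝ)/2) = P⁻¹ := by
    rw [hP, show (-(3:ℝ)/2) = -((3:ℝ)/2) by norm_num, Real.rpow_neg htb.le]
  set C' : ℝ := max 1 (4*C) with hC'def
  have hC'1 : (1:ℝ) ≤ C' := le_max_left _ _
  have hC'2 : 4*C ≤ C' := le_max_right _ _
  refine ⟨C', lt_of_lt_of_le one_pos hC'1, 1, ?_⟩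
  intro N hN
  have hN1 : (1:ℝ) ≤ (N:ℝ) := by exact_mod_cast hN
  have hN0 : (0:ℝ) < (N:ℝ) := by linarith
  set eN : ℝ := Real.exp (-((N:ℝ)*M)) with heNdef
  have heN0 : 0 < eN := Real.exp_pos _
  set J : ℝ := ∫ u in (0:ℝ)..M, Real.exp (-((N:ℝ)*u)) * k u with hJdef
  have hexpcont : Continuous (fun u : ℝ => Real.exp (-((N:ℝ)*u))) :=
    Real.continuous_exp.comp (continuous_const.mul continuous_id).neg
  have hexpk_cont : ContinuousOn (fun u => Real.exp (-((N:ℝ)*u)) * k u) (Icc 0 M) :=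
    hexpcont.continuousOn.mul hkcont
  have hint1 : IntervalIntegrable (fun u => Real.exp (-((N:ℝ)*u)) * k u) volume 0 M :=
    ContinuousOn.intervalIntegrable (by rw [uIcc_of_le hM.le]; exact hexpk_cont)
  -- upper bound
  have hub : J ≤ k 0 * ((1 - eN)/(N:ℝ)) := by
    have h1 : J ≤ ∫ u in (0:ℝ)..M, k 0 * Real.exp (-((N:ℝ)*u)) := by
      apply intervalIntegral.integral_mono_on hM.le hint1
        ((continuous_const.mul hexpcont).intervalIntegrable _ _)
      intro u hu
      have h2 := hkIcc u hu
      have h3 := (Real.exp_pos (-((N:ℝ)*u))).le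
      simp only [Pi.mul_apply]
      nlinarith
    rwa [intervalIntegral.integral_const_mul, aux_exp_int _ _ hN0] at h1
  -- lower bound
  set B : ℝ := C * k 0 * (t - b) ^ (-(3:ℝ)/2) with hBdef
  have hBpos : 0 < B := by
    rw [hBdef, hrpow]
    positivity
  clear_value P C' eN J B
  have hlb : k 0 * ((1 - eN)/(N:ℝ)) - J ≤ B * (4/(N:ℝ)^2) := by
    have h1 : k 0 * ((1 - eN)/(N:ℝ)) - J
        = ∫ u in (0:ℝ)..M, (k 0 * Real.exp (-((N:ℝ)*u)) - Real.exp (-((N:ℝ)*u)) * k u) := by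
      rw [hJdef, heNdef,intervalIntegral.integral_sub (f := fun u => k 0 * Real.exp (-((N:ℝ)*u))) ((continuous_const.mul hexpcont).intervalIntegrable _ _) hint1,
        intervalIntegral.integral_const_mul, aux_exp_int _ _ hN0]
    have h2 : (∫ u in (0:ℝ)..M, (k 0 * Real.exp (-((N:ℝ)*u)) - Real.exp (-((N:ℝ)*u)) * k u))
        ≤ ∫ u in (0:ℝ)..M, B * (u * Real.exp (-((N:ℝ)*u))) := by
      apply intervalIntegral.integral_mono_on hM.le
        (((continuous_const.mul hexpcont).intervalIntegrable _ _).sub hint1)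
        ((continuous_const.mul ((continuous_id.mul hexpcont))).intervalIntegrable _ _)
      intro u hu
      have h3 := hkey u hu
      have h4 := (Real.exp_pos (-((N:ℝ)*u))).le
      have h5 : k 0 * Real.exp (-((N:ℝ)*u)) - Real.exp (-((N:ℝ)*u)) * k u
          = Real.exp (-((N:ℝ)*u)) * (k 0 - k u) := by ring
      simp only [Pi.mul_apply]
      rw [h5]
      have h6 : Real.exp (-((N:ℝ)*u)) * (k 0 - k u) ≤ Real.exp (-((N:ℝ)*u)) * (B * u) := by
        apply mul_le_mul_of_nonneg_left _ h4
        exact h3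
      refine h6.trans (le_of_eq (by simp only [id_eq]; ring))
    have h8 : (∫ u in (0:ℝ)..M, B * (u * Real.exp (-((N:ℝ)*u)))) ≤ B * (4/(N:ℝ)^2) := by
      rw [intervalIntegral.integral_const_mul]
      have := aux_uexp_int (N:ℝ) M hN0 hM.le
      have h9 : (4:ℝ)/(N:ℝ)^2 = 4/(N:ℝ)^2 := rfl
      nlinarith [hBpos.le]
    linarith
  -- absolute value bound on J - k 0 / N
  have hEbound : |J - k 0/(N:ℝ)| ≤ k 0 * eN/(N:ℝ) + B * (4/(N:ℝ)^2) := by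
    rw [abs_le]
    have hexpand : k 0 * ((1 - eN)/(N:ℝ)) = k 0/(N:ℝ) - k 0 * eN/(N:ℝ) := by ring
    constructor
    · linarith
    · have h4 : 0 ≤ B * (4/(N:ℝ)^2) := by positivity
      have h5 : 0 ≤ k 0 * eN/(N:ℝ) := by positivity
      linarith
  -- main term identity
  have hmain : Real.exp (-(N:ℝ) * η t) / ((N:ℝ)*(t-b)*(t-a)*deriv η t)
      = Real.exp (-(N:ℝ) * η t) * (k 0/(N:ℝ)) := by
    rw [hk0eq]
    exact aux_main _ _ _ _ _ hN0.ne' htb.ne' hta.ne' hdt.ne'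
  have hBeq : B * (4/(N:ℝ)^2) = (C * k 0 * P⁻¹) * (4/(N:ℝ)^2) := by rw [hBdef, hrpow]
  have hfinal : k 0 * eN/(N:ℝ) + B * (4/(N:ℝ)^2) ≤ (k 0/(N:ℝ)) * (C'/((N:ℝ)*P) + C'*(N:ℝ)*eN) := by
    rw [hBeq]
    exact aux_alg (k 0) eN P C C' (N:ℝ) hk0 heN0 hPpos hN1 hC'1 hC'2
  -- conclude
  have hgoalM : -(N:ℝ) * (η L - η t) = -((N:ℝ)*M) := by rw [← hMdef]; ring
  rw [hsub N, hmain, hgoalM, ← heNdef, ← hJdef]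
  calc |Real.exp (-(N:ℝ) * η t) * J - Real.exp (-(N:ℝ) * η t) * (k 0/(N:ℝ))|
      = Real.exp (-(N:ℝ) * η t) * |J - k 0/(N:ℝ)| := by
        rw [← mul_sub, abs_mul, abs_of_pos (Real.exp_pos _)]
    _ ≤ Real.exp (-(N:ℝ) * η t) * (k 0 * eN/(N:ℝ) + B * (4/(N:ℝ)^2)) :=
        mul_le_mul_of_nonneg_left hEbound (Real.exp_pos _).le
    _ ≤ Real.exp (-(N:ℝ) * η t) * ((k 0/(N:ℝ)) * (C'/((N:ℝ)*P) + C'*(N:ℝ)*eN)) :=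
        mul_le_mul_of_nonneg_left hfinal (Real.exp_pos _).le
    _ = Real.exp (-(N:ℝ) * η t) * (k 0/(N:ℝ)) * (C'/((N:ℝ)*P) + C'*(N:ℝ)*eN) := by ring
end

section
/- Let h : ℝ → ℝ be continuous, even, and positive-definite (nonnegative Fourier transform ĥ ≥ 0), and let μ be a compactly supported probability measure on ℝ. Then for every x ∈ ℝ^N, the quantity ∑_{i,j=1}^N [h(x_i - x_j) - h_μ(x_i) - h_μ(x_j) + h_{μμ}] is nonnegative; equivalently, U(x) := -(1/2) of this sum satisfies U(x) ≤ 0. This follows from the Fourier representation U(x) = -(1/(2√(2π))) ∫ |∑_{j=1}^N e^{itx_j} - N ∫ e^{its} dμ(s)|² ĥ(t) dt. -/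
open MeasureTheory Finset Complex

open ComplexConjugate


lemma aux_int {hhat : ℝ → ℝ} (hhatint : Integrable hhat) (g : ℝ → ℂ)
    (hg : AEStronglyMeasurable g (volume : Measure ℝ)) (hb : ∀ t, ‖g t‖ ≤ 1) :
    Integrable (fun t => g t * (hhat t : ℂ)) :=
  hhatint.ofReal.bdd_mul (c := 1) hg (Filter.Eventually.of_forall hb)

lemma aux_swap (μ : Measure ℝ) [IsProbabilityMeasure μ] {hhat : ℝ → ℝ}
    (hhatint : Integrable hhat) (k : ℝ → ℝ → ℂ)
    (hk : AEStronglyMeasurable (fun p : ℝ × ℝ => k p.2 p.1) (μ.prod volume))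
    (hb : ∀ t s, ‖k t s‖ ≤ 1) :
    ∫ s, (∫ t, k t s * (hhat t : ℂ)) ∂μ = ∫ t, (∫ s, k t s ∂μ) * (hhat t : ℂ) := by
  have hm : AEStronglyMeasurable (fun p : ℝ × ℝ => (hhat p.2 : ℂ)) (μ.prod volume) :=
    AEStronglyMeasurable.comp_snd
      (Complex.continuous_ofReal.comp_aestronglyMeasurable hhatint.aestronglyMeasurable)
  have hhatc : Integrable (fun p : ℝ × ℝ => (hhat p.2 : ℂ)) (μ.prod volume) := by
    rw [integrable_prod_iff hm]
    refine ⟨Filter.Eventually.of_forall fun s => hhatint.ofReal, ?_⟩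
    simpa using integrable_const (μ := μ) (∫ y : ℝ, ‖(hhat y : ℂ)‖)
  have hF : Integrable (Function.uncurry (fun s t => k t s * (hhat t : ℂ))) (μ.prod volume) := by
    have := hhatc.bdd_mul (c := 1) hk (Filter.Eventually.of_forall fun p => hb p.2 p.1)
    exact this
  rw [integral_integral_swap hF]
  simp_rw [integral_mul_const]


/-- For a continuous, even, integrable `h` with nonnegative Fourier transform
(Fourier inversion assumed), the Hoeffding remainder is nonnegative, i.e.
`U(x) ≤ 0`. -/
theorem positive_definite_U_nonpos
    (h : ℝ → ℝ) (hcont : Continuous h) (heven : ∀ t, h (-t) = h t)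
    (hint : Integrable h) (hbdd : ∃ M, ∀ t, |h t| ≤ M)
    (hhat : ℝ → ℝ) (hhatint : Integrable hhat)
    (hhatdef : ∀ t, (hhat t : ℂ)
      = (Real.sqrt (2 * Real.pi))⁻¹ * ∫ s : ℝ, Complex.exp (-Complex.I * t * s) * h s)
    (hhatpos : ∀ t, 0 ≤ hhat t)
    (hinv : ∀ s, (h s : ℂ)
      = (Real.sqrt (2 * Real.pi))⁻¹ * ∫ t : ℝ, Complex.exp (Complex.I * t * s) * hhat t)
    (μ : Measure ℝ) [IsProbabilityMeasure μ]
    (hcomp : ∃ K : Set ℝ, IsCompact K ∧ μ Kᶜ = 0)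
    (hμf : ℝ → ℝ) (hμdef : ∀ t, hμf t = ∫ s, h (t - s) ∂μ)
    (hμμ : ℝ) (hμμdef : hμμ = ∫ t, ∫ s, h (t - s) ∂μ ∂μ)
    (N : ℕ) (x : Fin N → ℝ)
    (U : ℝ)
    (hU : U = -(1/2) * ∑ i : Fin N, ∑ j : Fin N,
        (h (x i - x j) - hμf (x i) - hμf (x j) + hμμ)) :
    (0 ≤ ∑ i : Fin N, ∑ j : Fin N,
        (h (x i - x j) - hμf (x i) - hμf (x j) + hμμ)) ∧ U ≤ 0 := by
  set c : ℝ := (Real.sqrt (2 * Real.pi))⁻¹ with hcdef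
  have hcpos : 0 < c := by
    have : 0 < Real.sqrt (2 * Real.pi) := Real.sqrt_pos.2 (by positivity)
    exact inv_pos.2 this
  -- basic exponential facts
  have hnorm : ∀ z : ℂ, z.re = 0 → ‖Complex.exp z‖ = 1 := by
    intro z hz
    rw [Complex.norm_exp, hz, Real.exp_zero]
  have hE : ∀ a t : ℝ, ‖Complex.exp (Complex.I * t * a)‖ = 1 := by
    intro a t; apply hnorm; simp
  have hE' : ∀ a t : ℝ, ‖Complex.exp (-(Complex.I * t * a))‖ = 1 := by
    intro a t; apply hnorm; simp
  have hconjexp : ∀ a t : ℝ,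
      conj (Complex.exp (Complex.I * t * a)) = Complex.exp (-(Complex.I * t * a)) := by
    intro a t
    rw [← Complex.exp_conj]
    congr 1
    simp [Complex.conj_I]
  -- the characteristic function and its conjugate
  set φ : ℝ → ℂ := fun t => ∫ s, Complex.exp (Complex.I * t * s) ∂μ with hφdef
  set ψ : ℝ → ℂ := fun t => ∫ s, Complex.exp (-(Complex.I * t * s)) ∂μ with hψdef
  have hψconj : ∀ t, ψ t = conj (φ t) := by
    intro t
    rw [hφdef, ← integral_conj]
    simp only [hconjexp]
    rfl
  have hφnorm : ∀ t, ‖φ t‖ ≤ 1 := by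
    intro t
    calc ‖φ t‖ ≤ ∫ s, ‖Complex.exp (Complex.I * t * s)‖ ∂μ := norm_integral_le_integral_norm _
    _ = ∫ (_ : ℝ), (1 : ℝ) ∂μ := by simp_rw [hE]
    _ = 1 := by simp
  have hψnorm : ∀ t, ‖ψ t‖ ≤ 1 := by
    intro t; rw [hψconj]; simpa using hφnorm t
  have hφm : AEStronglyMeasurable φ (volume : Measure ℝ) := by
    have hc : Continuous fun p : ℝ × ℝ => Complex.exp (Complex.I * p.1 * p.2) := by fun_prop
    exact (hc.stronglyMeasurable.integral_prod_right').aestronglyMeasurable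
  have hψm : AEStronglyMeasurable ψ (volume : Measure ℝ) := by
    have hc : Continuous fun p : ℝ × ℝ => Complex.exp (-(Complex.I * p.1 * p.2)) := by fun_prop
    exact (hc.stronglyMeasurable.integral_prod_right').aestronglyMeasurable
  -- Fourier representations
  have hA2 : ∀ a b : ℝ, ((h (a - b) : ℝ) : ℂ)
      = c * ∫ t : ℝ, (Complex.exp (Complex.I * t * a) * Complex.exp (-(Complex.I * t * b))) * hhat t := by
    intro a b
    rw [hinv (a - b)]
    congr 1
    refine integral_congr_ae (Filter.Eventually.of_forall fun t => ?_)
    dsimp only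
    rw [← Complex.exp_add]
    congr 1
    push_cast
    ring
  have hB : ∀ a : ℝ, ((hμf a : ℝ) : ℂ)
      = c * ∫ t : ℝ, Complex.exp (Complex.I * t * a) * ψ t * hhat t := by
    intro a
    have h1 : ((hμf a : ℝ) : ℂ) = ∫ s, ((h (a - s) : ℝ) : ℂ) ∂μ := by
      rw [hμdef]; exact integral_ofReal.symm
    rw [h1]
    calc ∫ s, ((h (a - s) : ℝ) : ℂ) ∂μ
        = ∫ s : ℝ, ((c : ℂ) * ∫ t : ℝ, (Complex.exp (Complex.I * t * a)
            * Complex.exp (-(Complex.I * t * s))) * hhat t) ∂μ :=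
          integral_congr_ae (Filter.Eventually.of_forall fun s => hA2 a s)
      _ = (c : ℂ) * ∫ s : ℝ, (∫ t : ℝ, (Complex.exp (Complex.I * t * a)
            * Complex.exp (-(Complex.I * t * s))) * hhat t) ∂μ := integral_const_mul _ _
      _ = (c : ℂ) * ∫ t : ℝ, (∫ s : ℝ, Complex.exp (Complex.I * t * a)
            * Complex.exp (-(Complex.I * t * s)) ∂μ) * hhat t := by
          rw [aux_swap μ hhatint
            (fun t s => Complex.exp (Complex.I * t * a) * Complex.exp (-(Complex.I * t * s)))
            ((by fun_prop : Continuous fun p : ℝ × ℝ =>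
              Complex.exp (Complex.I * p.2 * a) * Complex.exp (-(Complex.I * p.2 * p.1))).aestronglyMeasurable)
            (fun t s => by rw [norm_mul, hE, hE']; norm_num)]
      _ = (c : ℂ) * ∫ t : ℝ, Complex.exp (Complex.I * t * a) * ψ t * hhat t := by
          refine congrArg _ (integral_congr_ae (Filter.Eventually.of_forall fun t => ?_))
          dsimp only
          rw [integral_const_mul]
  have hB' : ∀ a : ℝ, ((hμf a : ℝ) : ℂ)
      = c * ∫ t : ℝ, Complex.exp (-(Complex.I * t * a)) * φ t * hhat t := by
    intro a
    have h1 := congrArg (starRingEnd ℂ) (hB a)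
    rw [Complex.conj_ofReal, map_mul, Complex.conj_ofReal, ← integral_conj] at h1
    rw [h1]
    refine congrArg _ (integral_congr_ae (Filter.Eventually.of_forall fun t => ?_))
    dsimp only
    rw [map_mul, map_mul, hconjexp, Complex.conj_ofReal, hψconj, Complex.conj_conj]
  have hC : ((hμμ : ℝ) : ℂ) = c * ∫ t : ℝ, φ t * ψ t * hhat t := by
    have h0 : ((hμμ : ℝ) : ℂ) = ∫ a, ((hμf a : ℝ) : ℂ) ∂μ := by
      rw [hμμdef]
      simp_rw [← hμdef]
      exact integral_ofReal.symm
    rw [h0]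
    calc ∫ a, ((hμf a : ℝ) : ℂ) ∂μ
        = ∫ a : ℝ, ((c : ℂ) * ∫ t : ℝ, (Complex.exp (Complex.I * t * a) * ψ t) * hhat t) ∂μ := by
          refine integral_congr_ae (Filter.Eventually.of_forall fun a => ?_)
          dsimp only
          rw [hB a]
      _ = (c : ℂ) * ∫ a : ℝ, (∫ t : ℝ, (Complex.exp (Complex.I * t * a) * ψ t) * hhat t) ∂μ :=
          integral_const_mul _ _
      _ = (c : ℂ) * ∫ t : ℝ, (∫ a : ℝ, Complex.exp (Complex.I * t * a) * ψ t ∂μ) * hhat t := by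
          rw [aux_swap μ hhatint (fun t s => Complex.exp (Complex.I * t * s) * ψ t)
            (((by fun_prop : Continuous fun p : ℝ × ℝ =>
              Complex.exp (Complex.I * p.2 * p.1)).aestronglyMeasurable).mul
              (hψm.comp_snd (μ := μ)))
            (fun t s => by
              rw [norm_mul, hE]
              simpa using hψnorm t)]
      _ = (c : ℂ) * ∫ t : ℝ, φ t * ψ t * hhat t := by
          refine congrArg _ (integral_congr_ae (Filter.Eventually.of_forall fun t => ?_))
          dsimp only
          rw [integral_mul_const]
  -- the integrand family
  set g : Fin N → Fin N → ℝ → ℂ := fun i j t =>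
    (Complex.exp (Complex.I * t * (x i)) * Complex.exp (-(Complex.I * t * (x j)))
      - Complex.exp (Complex.I * t * (x i)) * ψ t
      - Complex.exp (-(Complex.I * t * (x j))) * φ t
      + φ t * ψ t) * hhat t with hgdef
  -- integrability of the pieces
  have hI1 : ∀ i j : Fin N, Integrable (fun t : ℝ =>
      (Complex.exp (Complex.I * t * (x i)) * Complex.exp (-(Complex.I * t * (x j)))) * hhat t) := by
    intro i j
    refine aux_int hhatint _ ?_ ?_
    · exact (by fun_prop : Continuous fun t : ℝ =>
        Complex.exp (Complex.I * t * (x i)) * Complex.exp (-(Complex.I * t * (x j)))).aestronglyMeasurable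
    · intro t; rw [norm_mul, hE, hE']; norm_num
  have hI2 : ∀ i : Fin N, Integrable (fun t : ℝ =>
      (Complex.exp (Complex.I * t * (x i)) * ψ t) * hhat t) := by
    intro i
    refine aux_int hhatint _ ?_ ?_
    · exact ((by fun_prop : Continuous fun t : ℝ =>
        Complex.exp (Complex.I * t * (x i))).aestronglyMeasurable.mul hψm)
    · intro t; rw [norm_mul, hE, one_mul]; exact hψnorm t
  have hI3 : ∀ j : Fin N, Integrable (fun t : ℝ =>
      (Complex.exp (-(Complex.I * t * (x j))) * φ t) * hhat t) := by
    intro j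
    refine aux_int hhatint _ ?_ ?_
    · exact ((by fun_prop : Continuous fun t : ℝ =>
        Complex.exp (-(Complex.I * t * (x j)))).aestronglyMeasurable.mul hφm)
    · intro t; rw [norm_mul, hE', one_mul]; exact hφnorm t
  have hI4 : Integrable (fun t : ℝ => (φ t * ψ t) * hhat t) := by
    refine aux_int hhatint _ (hφm.mul hψm) ?_
    intro t
    rw [norm_mul]
    nlinarith [hφnorm t, hψnorm t, norm_nonneg (φ t), norm_nonneg (ψ t)]
  have hgint : ∀ i j : Fin N, Integrable (g i j) := by
    intro i j
    refine ((((hI1 i j).sub (hI2 i)).sub (hI3 j)).add hI4).congr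
      (Filter.Eventually.of_forall fun t => ?_)
    simp only [hgdef, Pi.add_apply, Pi.sub_apply, Pi.neg_apply]
    ring
  -- the Fourier representation of each term of the double sum
  have hterm : ∀ i j : Fin N, ((h (x i - x j) : ℝ) : ℂ)
      - (hμf (x i) : ℝ) - (hμf (x j) : ℝ) + (hμμ : ℝ)
      = c * ∫ t : ℝ, g i j t := by
    intro i j
    rw [hA2 (x i) (x j), hB (x i), hB' (x j), hC, ← mul_sub, ← mul_sub, ← mul_add]
    congr 1
    have e : ∫ t : ℝ, g i j t
        = ∫ t : ℝ, ((Complex.exp (Complex.I * t * (x i)) * Complex.exp (-(Complex.I * t * (x j)))) * hhat t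
          - (Complex.exp (Complex.I * t * (x i)) * ψ t) * hhat t
          - (Complex.exp (-(Complex.I * t * (x j))) * φ t) * hhat t
          + (φ t * ψ t) * hhat t) := by
      refine integral_congr_ae (Filter.Eventually.of_forall fun t => ?_)
      simp only [hgdef]
      ring
    have hI12 : Integrable (fun t : ℝ =>
        (Complex.exp (Complex.I * t * (x i)) * Complex.exp (-(Complex.I * t * (x j)))) * hhat t
          - (Complex.exp (Complex.I * t * (x i)) * ψ t) * hhat t) := (hI1 i j).sub (hI2 i)
    have hI123 : Integrable (fun t : ℝ =>
        (Complex.exp (Complex.I * t * (x i)) * Complex.exp (-(Complex.I * t * (x j)))) * hhat t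
          - (Complex.exp (Complex.I * t * (x i)) * ψ t) * hhat t
          - (Complex.exp (-(Complex.I * t * (x j))) * φ t) * hhat t) := hI12.sub (hI3 j)
    rw [e, integral_add hI123 hI4, integral_sub hI12 (hI3 j), integral_sub (hI1 i j) (hI2 i)]
  -- sum over i, j
  have hsum1 : ((∑ i : Fin N, ∑ j : Fin N,
        (h (x i - x j) - hμf (x i) - hμf (x j) + hμμ) : ℝ) : ℂ)
      = (c : ℂ) * ∫ t : ℝ, ∑ i : Fin N, ∑ j : Fin N, g i j t := by
    push_cast
    rw [show (∑ i : Fin N, ∑ j : Fin N, (((h (x i - x j) : ℝ) : ℂ)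
          - (hμf (x i) : ℝ) - (hμf (x j) : ℝ) + (hμμ : ℝ)))
        = ∑ i : Fin N, ∑ j : Fin N, (c : ℂ) * ∫ t : ℝ, g i j t from
      Finset.sum_congr rfl fun i _ => Finset.sum_congr rfl fun j _ => hterm i j]
    simp_rw [← Finset.mul_sum]
    congr 1
    calc ∑ i : Fin N, ∑ j : Fin N, ∫ t : ℝ, g i j t
        = ∑ i : Fin N, ∫ t : ℝ, ∑ j : Fin N, g i j t :=
          Finset.sum_congr rfl fun i _ => (integral_finset_sum _ fun j _ => hgint i j).symm
      _ = ∫ t : ℝ, ∑ i : Fin N, ∑ j : Fin N, g i j t :=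
          (integral_finset_sum _ fun i _ => integrable_finset_sum _ fun j _ => hgint i j).symm
  -- pointwise identity with the squared modulus
  have hpt : ∀ t : ℝ, (∑ i : Fin N, ∑ j : Fin N, g i j t)
      = ((Complex.normSq ((∑ j : Fin N, Complex.exp (Complex.I * t * (x j))) - (N : ℂ) * φ t)
          * hhat t : ℝ) : ℂ) := by
    intro t
    have e1 : ∑ i : Fin N, ∑ j : Fin N, g i j t
        = (∑ i : Fin N, (Complex.exp (Complex.I * t * (x i)) - φ t))
          * (∑ j : Fin N, (Complex.exp (-(Complex.I * t * (x j))) - ψ t)) * hhat t := by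
      rw [Finset.sum_mul_sum]
      simp only [Finset.sum_mul]
      refine Finset.sum_congr rfl fun i _ => Finset.sum_congr rfl fun j _ => ?_
      simp only [hgdef]
      ring
    have e2 : (∑ i : Fin N, (Complex.exp (Complex.I * t * (x i)) - φ t))
        = (∑ j : Fin N, Complex.exp (Complex.I * t * (x j))) - (N : ℂ) * φ t := by
      rw [Finset.sum_sub_distrib, Finset.sum_const, Finset.card_univ, Fintype.card_fin,
        nsmul_eq_mul]
    have e3 : (∑ j : Fin N, (Complex.exp (-(Complex.I * t * (x j))) - ψ t))
        = conj ((∑ j : Fin N, Complex.exp (Complex.I * t * (x j))) - (N : ℂ) * φ t) := by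
      rw [map_sub, map_sum, map_mul, map_natCast, ← hψconj t]
      simp only [hconjexp]
      rw [Finset.sum_sub_distrib, Finset.sum_const, Finset.card_univ, Fintype.card_fin,
        nsmul_eq_mul]
    rw [e1, e2, e3, Complex.mul_conj]
    push_cast
    ring
  -- conclude
  have hnonneg : (0 : ℝ) ≤ ∑ i : Fin N, ∑ j : Fin N,
      (h (x i - x j) - hμf (x i) - hμf (x j) + hμμ) := by
    have hfin : ((∑ i : Fin N, ∑ j : Fin N,
          (h (x i - x j) - hμf (x i) - hμf (x j) + hμμ) : ℝ) : ℂ)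
        = ((c * ∫ t : ℝ, Complex.normSq ((∑ j : Fin N, Complex.exp (Complex.I * t * (x j)))
            - (N : ℂ) * φ t) * hhat t : ℝ) : ℂ) := by
      rw [hsum1, integral_congr_ae (Filter.Eventually.of_forall hpt)]
      have hcast : (∫ t : ℝ, ((Complex.normSq ((∑ j : Fin N, Complex.exp (Complex.I * t * (x j)))
            - (N : ℂ) * φ t) * hhat t : ℝ) : ℂ))
          = ((∫ t : ℝ, Complex.normSq ((∑ j : Fin N, Complex.exp (Complex.I * t * (x j)))
            - (N : ℂ) * φ t) * hhat t : ℝ) : ℂ) := integral_ofReal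
      rw [hcast]
      push_cast
      ring
    have hre := Complex.ofReal_inj.mp hfin
    rw [hre]
    refine mul_nonneg hcpos.le (integral_nonneg fun t => ?_)
    exact mul_nonneg (Complex.normSq_nonneg _) (hhatpos t)
  refine ⟨hnonneg, ?_⟩
  rw [hU]
  nlinarith [hnonneg]
end

section
/- There exists a constant C > 1 such that for all s, t ≥ 1, 1/C ≤ K_Ai(s,t) · (st)^{1/4} (√s + √t) · exp((2/3)(s^{3/2} + t^{3/2})) ≤ C, where K_Ai is the Airy kernel. In particular, for any ε > 0 and all s, t ∈ [1, N^ε], K_Ai(s,t) ≥ C^{-1} N^{-ε/2} (st)^{-1/4} e^{-(2/3)(s^{3/2}+t^{3/2})} /2. -/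
open Real Set Filter MeasureTheory

private lemma rpow32 (z : ℝ) (hz : 0 ≤ z) : z ^ ((3:ℝ)/2) = z * Real.sqrt z := by
  rcases eq_or_lt_of_le hz with h | h
  · simp [← h, Real.zero_rpow (by norm_num : (3:ℝ)/2 ≠ 0)]
  · rw [Real.sqrt_eq_rpow, show (3:ℝ)/2 = 1 + 1/2 by norm_num, Real.rpow_add h, Real.rpow_one]

private lemma pow32_lower {x r : ℝ} (hx : 0 ≤ x) (hr : 0 ≤ r) :
    x ^ ((3:ℝ)/2) + Real.sqrt x * r ≤ (x + r) ^ ((3:ℝ)/2) := by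
  rw [rpow32 x hx, rpow32 (x+r) (by linarith)]
  have h1 : Real.sqrt x ≤ Real.sqrt (x+r) := Real.sqrt_le_sqrt (by linarith)
  nlinarith [Real.sqrt_nonneg x, Real.sqrt_nonneg (x+r)]

private lemma pow32_upper {x r : ℝ} (hx : 1 ≤ x) (hr : 0 ≤ r) (hr1 : r ≤ 1) :
    (x + r) ^ ((3:ℝ)/2) ≤ x ^ ((3:ℝ)/2) + (3/2) * (Real.sqrt x + 1) * r := by
  rw [rpow32 x (by linarith), rpow32 (x+r) (by linarith)]
  set u := Real.sqrt x with hu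
  have hu1 : 1 ≤ u := by rw [hu, show (1:ℝ) = Real.sqrt 1 by simp]; exact Real.sqrt_le_sqrt hx
  have hux : u * u = x := Real.mul_self_sqrt (by linarith)
  have key : Real.sqrt (x + r) ≤ u + r / (2*u) := by
    have hune : u ≠ 0 := by linarith
    have hmul : u * (r/(2*u)) = r/2 := by field_simp
    have h2 : Real.sqrt (x+r) ≤ Real.sqrt ((u + r/(2*u))^2) := by
      apply Real.sqrt_le_sqrt
      nlinarith [sq_nonneg (r/(2*u))]
    rwa [Real.sqrt_sq (by positivity)] at h2
  have hsr : Real.sqrt (x + r) ≤ u + 1 := by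
    calc Real.sqrt (x+r) ≤ u + r/(2*u) := key
    _ ≤ u + 1 := by
        have : r / (2*u) ≤ 1 := by
          rw [div_le_one (by positivity)]; nlinarith
        linarith
  calc (x+r) * Real.sqrt (x+r) = x * Real.sqrt (x+r) + r * Real.sqrt (x+r) := by ring
  _ ≤ x * (u + r/(2*u)) + r * (u + 1) := by
      apply add_le_add
      · exact mul_le_mul_of_nonneg_left key (by linarith)
      · exact mul_le_mul_of_nonneg_left hsr hr
  _ ≤ x * u + (3/2) * (u + 1) * r := by
      have : x * (r / (2*u)) = (u/2) * r := by
        field_simp; nlinarith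
      nlinarith

/-- comparison profile -/
private noncomputable def gfun (t : ℝ) : ℝ :=
  (t ^ ((1:ℝ)/4))⁻¹ * Real.exp (-((2/3) * t ^ ((3:ℝ)/2)))

private lemma gfun_pos {t : ℝ} (ht : 0 < t) : 0 < gfun t := by
  unfold gfun; positivity

private lemma gfun_upper {x r : ℝ} (hx : 1 ≤ x) (hr : 0 ≤ r) :
    gfun (x+r) ≤ gfun x * Real.exp (-((2/3) * (Real.sqrt x * r))) := by
  unfold gfun
  have hx0 : (0:ℝ) < x := by linarith
  have h1 : ((x+r) ^ ((1:ℝ)/4))⁻¹ ≤ (x ^ ((1:ℝ)/4))⁻¹ := by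
    apply inv_anti₀ (Real.rpow_pos_of_pos hx0 _)
    exact Real.rpow_le_rpow hx0.le (by linarith) (by norm_num)
  have h2 : Real.exp (-((2/3) * (x+r) ^ ((3:ℝ)/2)))
      ≤ Real.exp (-((2/3) * x ^ ((3:ℝ)/2))) * Real.exp (-((2/3) * (Real.sqrt x * r))) := by
    rw [← Real.exp_add]
    apply Real.exp_le_exp.mpr
    have := pow32_lower hx0.le hr
    linarith
  calc ((x+r) ^ ((1:ℝ)/4))⁻¹ * Real.exp (-((2/3) * (x+r) ^ ((3:ℝ)/2)))
      ≤ (x ^ ((1:ℝ)/4))⁻¹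
        * (Real.exp (-((2/3) * x ^ ((3:ℝ)/2))) * Real.exp (-((2/3) * (Real.sqrt x * r)))) := by
        apply mul_le_mul h1 h2 (Real.exp_pos _).le (by positivity)
  _ = (x ^ ((1:ℝ)/4))⁻¹ * Real.exp (-((2/3) * x ^ ((3:ℝ)/2)))
        * Real.exp (-((2/3) * (Real.sqrt x * r))) := by ring

private lemma gfun_lower {x r : ℝ} (hx : 1 ≤ x) (hr : 0 ≤ r) (hr1 : r ≤ 1) :
    ((2:ℝ) ^ ((1:ℝ)/4))⁻¹ * gfun x * Real.exp (-((Real.sqrt x + 1) * r)) ≤ gfun (x+r) := by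
  unfold gfun
  have hx0 : (0:ℝ) < x := by linarith
  have hxr0 : (0:ℝ) < x + r := by linarith
  have h1 : ((2:ℝ) ^ ((1:ℝ)/4))⁻¹ * (x ^ ((1:ℝ)/4))⁻¹ ≤ ((x+r) ^ ((1:ℝ)/4))⁻¹ := by
    rw [← mul_inv, ← Real.mul_rpow (by norm_num) hx0.le]
    apply inv_anti₀ (Real.rpow_pos_of_pos hxr0 _)
    exact Real.rpow_le_rpow hxr0.le (by linarith) (by norm_num)
  have h2 : Real.exp (-((2/3) * x ^ ((3:ℝ)/2))) * Real.exp (-((Real.sqrt x + 1) * r))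
      ≤ Real.exp (-((2/3) * (x+r) ^ ((3:ℝ)/2))) := by
    rw [← Real.exp_add]
    apply Real.exp_le_exp.mpr
    have := pow32_upper hx hr hr1
    linarith
  calc ((2:ℝ) ^ ((1:ℝ)/4))⁻¹ * ((x ^ ((1:ℝ)/4))⁻¹ * Real.exp (-((2/3) * x ^ ((3:ℝ)/2))))
        * Real.exp (-((Real.sqrt x + 1) * r))
      = ((2:ℝ) ^ ((1:ℝ)/4))⁻¹ * (x ^ ((1:ℝ)/4))⁻¹
        * (Real.exp (-((2/3) * x ^ ((3:ℝ)/2))) * Real.exp (-((Real.sqrt x + 1) * r))) := by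
        ring
  _ ≤ ((x+r) ^ ((1:ℝ)/4))⁻¹ * Real.exp (-((2/3) * (x+r) ^ ((3:ℝ)/2))) :=
      mul_le_mul h1 h2 (by positivity) (by positivity)

set_option maxHeartbeats 1600000 in
/-- Two-sided bound for the Airy kernel in the right tail:
`1/C ≤ K_Ai(s,t)(st)^{1/4}(√s+√t)e^{(2/3)(s^{3/2}+t^{3/2})} ≤ C` for `s,t ≥ 1`;
in particular `K_Ai(s,t) ≥ C⁻¹N^{-ε/2}(st)^{-1/4}e^{-(2/3)(s^{3/2}+t^{3/2})}/2`
for `s,t ∈ [1,N^ε]`. -/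
theorem airy_kernel_two_sided_bound
    (Ai : ℝ → ℝ) (hsmooth : ContDiff ℝ 2 Ai)
    (hODE : ∀ t, deriv (deriv Ai) t = t * Ai t)
    (hasympAi : ∃ C₀ > 0, ∃ t₀ > 0, ∀ t : ℝ, t₀ ≤ t →
      |Ai t * Real.sqrt (4 * π * Real.sqrt t) * Real.exp ((2/3) * t ^ ((3:ℝ)/2)) - 1|
        ≤ C₀ * t ^ (-(3:ℝ)/2))
    (hasympAi' : ∃ C₀ > 0, ∃ t₀ > 0, ∀ t : ℝ, t₀ ≤ t →
      |deriv Ai t * (-(2 * Real.sqrt π) / t ^ ((1:ℝ)/4))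
          * Real.exp ((2/3) * t ^ ((3:ℝ)/2)) - 1| ≤ C₀ * t ^ (-(3:ℝ)/2))
    (KAi : ℝ → ℝ → ℝ)
    (hKAi : ∀ s t, KAi s t = ∫ r in Ioi (0:ℝ), Ai (s + r) * Ai (t + r)) :
    ∃ C > 1,
      (∀ s t : ℝ, 1 ≤ s → 1 ≤ t →
        1 / C ≤ KAi s t * (s * t) ^ ((1:ℝ)/4) * (Real.sqrt s + Real.sqrt t)
            * Real.exp ((2/3) * (s ^ ((3:ℝ)/2) + t ^ ((3:ℝ)/2))) ∧
          KAi s t * (s * t) ^ ((1:ℝ)/4) * (Real.sqrt s + Real.sqrt t)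
            * Real.exp ((2/3) * (s ^ ((3:ℝ)/2) + t ^ ((3:ℝ)/2))) ≤ C) ∧
      (∀ ε : ℝ, 0 < ε → ∀ N : ℕ, 1 ≤ N →
        ∀ s t : ℝ, s ∈ Icc (1:ℝ) ((N:ℝ) ^ ε) → t ∈ Icc (1:ℝ) ((N:ℝ) ^ ε) →
          C⁻¹ * (N:ℝ) ^ (-ε/2) * (s * t) ^ (-(1:ℝ)/4)
              * Real.exp (-(2/3) * (s ^ ((3:ℝ)/2) + t ^ ((3:ℝ)/2))) / 2
            ≤ KAi s t) := by
  obtain ⟨C₀, hC₀, t₀, ht₀, hA⟩ := hasympAi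
  obtain ⟨C₁, hC₁, t₁, ht₁, hA'⟩ := hasympAi'
  set T : ℝ := max 1 (max (max t₀ t₁) (max ((2*C₀)^((2:ℝ)/3)) ((2*C₁)^((2:ℝ)/3)))) with hT
  have hT1 : 1 ≤ T := le_max_left _ _
  have hT0 : 0 < T := by linarith
  have hTt₀ : t₀ ≤ T := le_trans (le_trans (le_max_left _ _) (le_max_left _ _)) (le_max_right _ _)
  have hTt₁ : t₁ ≤ T := le_trans (le_trans (le_max_right _ _) (le_max_left _ _)) (le_max_right _ _)
  have hTC₀ : (2*C₀)^((2:ℝ)/3) ≤ T :=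
    le_trans (le_trans (le_max_left _ _) (le_max_right _ _)) (le_max_right _ _)
  have hTC₁ : (2*C₁)^((2:ℝ)/3) ≤ T :=
    le_trans (le_trans (le_max_right _ _) (le_max_right _ _)) (le_max_right _ _)
  clear_value T
  -- smallness of the error terms
  have hsmall : ∀ (c : ℝ), 0 < c → (2*c)^((2:ℝ)/3) ≤ T → ∀ t : ℝ, T ≤ t →
      c * t ^ (-(3:ℝ)/2) ≤ 1/2 := by
    intro c hc hcT t ht
    have ht0 : (0:ℝ) < t := lt_of_lt_of_le hT0 ht
    have h32 : 2*c ≤ t ^ ((3:ℝ)/2) := by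
      have h1 : ((2*c)^((2:ℝ)/3)) ^ ((3:ℝ)/2) ≤ t ^ ((3:ℝ)/2) :=
        Real.rpow_le_rpow (Real.rpow_nonneg (by linarith) _) (le_trans hcT ht) (by norm_num)
      rwa [← Real.rpow_mul (by linarith : (0:ℝ) ≤ 2*c), show (2:ℝ)/3 * (3/2) = 1 by norm_num,
        Real.rpow_one] at h1
    have hpow : t ^ (-(3:ℝ)/2) = (t ^ ((3:ℝ)/2))⁻¹ := by
      rw [show -(3:ℝ)/2 = -((3:ℝ)/2) by norm_num, Real.rpow_neg ht0.le]
    rw [hpow]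
    have hp2 : 0 < t ^ ((3:ℝ)/2) := Real.rpow_pos_of_pos ht0 _
    rw [mul_inv_le_iff₀ hp2]
    nlinarith
  set sp : ℝ := Real.sqrt (4*π) with hsp
  have hsppos : 0 < sp := Real.sqrt_pos.mpr (by positivity)
  clear_value sp
  -- asymptotic band for Ai on [T, ∞)
  have hband : ∀ t : ℝ, T ≤ t →
      (1/(2*sp)) * gfun t ≤ Ai t ∧ Ai t ≤ (3/(2*sp)) * gfun t := by
    intro t ht
    have ht0 : (0:ℝ) < t := lt_of_lt_of_le hT0 ht
    have hq : Real.sqrt (4 * π * Real.sqrt t) = sp * t ^ ((1:ℝ)/4) := by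
      rw [Real.sqrt_mul (by positivity : (0:ℝ) ≤ 4*π), hsp]
      congr 1
      rw [Real.sqrt_eq_rpow, Real.sqrt_eq_rpow, ← Real.rpow_mul ht0.le]
      norm_num
    have habs := hA t (le_trans hTt₀ ht)
    rw [hq] at habs
    have h12 := hsmall C₀ hC₀ hTC₀ t ht
    rw [abs_le] at habs
    have hP : 0 < sp * t ^ ((1:ℝ)/4) * Real.exp ((2/3) * t ^ ((3:ℝ)/2)) := by positivity
    have hglow : (1/(2*sp)) * gfun t
        = (1/2) / (sp * t ^ ((1:ℝ)/4) * Real.exp ((2/3) * t ^ ((3:ℝ)/2))) := by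
      unfold gfun
      rw [Real.exp_neg]
      field_simp
    have hghigh : (3/(2*sp)) * gfun t
        = (3/2) / (sp * t ^ ((1:ℝ)/4) * Real.exp ((2/3) * t ^ ((3:ℝ)/2))) := by
      unfold gfun
      rw [Real.exp_neg]
      field_simp
    have hassoc : Ai t * (sp * t ^ ((1:ℝ)/4)) * Real.exp ((2/3) * t ^ ((3:ℝ)/2))
        = Ai t * (sp * t ^ ((1:ℝ)/4) * Real.exp ((2/3) * t ^ ((3:ℝ)/2))) := by ring
    constructor
    · rw [hglow, div_le_iff₀ hP]; linarith
    · rw [hghigh, le_div_iff₀ hP]; linarith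
  -- Ai is positive at T, with negative derivative at T
  have hAiT : 0 < Ai T :=
    lt_of_lt_of_le (mul_pos (by positivity) (gfun_pos hT0)) ((hband T le_rfl).1)
  have hcont : Continuous Ai := hsmooth.continuous
  have hcd : Continuous (deriv Ai) :=
    hsmooth.continuous_deriv (by norm_num)
  have hdT : deriv Ai T < 0 := by
    have habs := hA' T hTt₁
    have h12 := hsmall C₁ hC₁ hTC₁ T le_rfl
    rw [abs_le] at habs
    have hfac : -(2 * Real.sqrt π) / T ^ ((1:ℝ)/4) < 0 := by
      apply div_neg_of_neg_of_pos
      · have : 0 < Real.sqrt π := Real.sqrt_pos.mpr Real.pi_pos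
        linarith
      · exact Real.rpow_pos_of_pos hT0 _
    have hexp : 0 < Real.exp ((2/3) * T ^ ((3:ℝ)/2)) := Real.exp_pos _
    by_contra h
    push_neg at h
    have h1 : deriv Ai T * (-(2 * Real.sqrt π) / T ^ ((1:ℝ)/4)) ≤ 0 :=
      mul_nonpos_of_nonneg_of_nonpos h hfac.le
    have h2 : deriv Ai T * (-(2 * Real.sqrt π) / T ^ ((1:ℝ)/4))
        * Real.exp ((2/3) * T ^ ((3:ℝ)/2)) ≤ 0 :=
      mul_nonpos_of_nonpos_of_nonneg h1 hexp.le
    linarith [habs.1]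
  -- positivity of Ai on [1, ∞)
  have hpos : ∀ x : ℝ, 1 ≤ x → 0 < Ai x := by
    have hposIcc : ∀ x ∈ Icc (1:ℝ) T, 0 < Ai x := by
      by_contra hcon
      push_neg at hcon
      obtain ⟨x, hx, hxle⟩ := hcon
      set S : Set ℝ := Icc (1:ℝ) T ∩ {u | Ai u ≤ 0} with hS
      have hSne : S.Nonempty := ⟨x, hx, hxle⟩
      have hScl : IsClosed S :=
        IsClosed.inter isClosed_Icc (isClosed_le hcont continuous_const)
      have hSbdd : BddAbove S := ⟨T, fun u hu => hu.1.2⟩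
      set a := sSup S with ha
      have haS : a ∈ S := hScl.csSup_mem hSne hSbdd
      have haT : a < T := by
        rcases lt_or_eq_of_le haS.1.2 with h | h
        · exact h
        · exfalso; rw [h] at haS; exact absurd haS.2 (not_le.2 hAiT)
      have ha1 : 1 ≤ a := haS.1.1
      have hApos : ∀ u : ℝ, a < u → u ≤ T → 0 < Ai u := by
        intro u hau huT
        by_contra h
        push_neg at h
        have hu : u ∈ S := ⟨⟨le_trans ha1 hau.le, huT⟩, h⟩
        exact absurd (le_csSup hSbdd hu) (not_le.2 hau)
      have hmono : StrictMonoOn (deriv Ai) (Icc a T) := by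
        apply strictMonoOn_of_deriv_pos (convex_Icc a T) hcd.continuousOn
        intro x hx
        rw [interior_Icc] at hx
        rw [hODE]
        exact mul_pos (by linarith [hx.1]) (hApos x hx.1 hx.2.le)
      have hanti : StrictAntiOn Ai (Icc a T) := by
        apply strictAntiOn_of_deriv_neg (convex_Icc a T) hcont.continuousOn
        intro x hx
        rw [interior_Icc] at hx
        have := hmono ⟨hx.1.le, hx.2.le⟩ ⟨haT.le, le_rfl⟩ hx.2
        linarith
      have hlast := hanti ⟨le_rfl, haT.le⟩ ⟨haT.le, le_rfl⟩ haT
      have haAi : Ai a ≤ 0 := haS.2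
      linarith
    intro x hx
    rcases le_total x T with h | h
    · exact hposIcc x ⟨hx, h⟩
    · exact lt_of_lt_of_le
        (mul_pos (by positivity) (gfun_pos (by linarith))) ((hband x h).1)
  -- continuity of gfun on the compact window and global band
  have hgc : ContinuousOn gfun (Icc (1:ℝ) T) := by
    have h14 : ContinuousOn (fun t : ℝ => t ^ ((1:ℝ)/4)) (Icc (1:ℝ) T) := fun x hx =>
      (Real.continuousAt_rpow_const x _ (Or.inl (by intro h; rw [h] at hx; linarith [hx.1]))).continuousWithinAt
    have h32c : ContinuousOn (fun t : ℝ => t ^ ((3:ℝ)/2)) (Icc (1:ℝ) T) := fun x hx =>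
      (Real.continuousAt_rpow_const x _ (Or.inr (by norm_num))).continuousWithinAt
    unfold gfun
    apply ContinuousOn.mul
    · exact h14.inv₀ fun x hx => ne_of_gt (Real.rpow_pos_of_pos (by linarith [hx.1]) _)
    · exact Real.continuous_exp.comp_continuousOn ((continuousOn_const.mul h32c).neg)
  obtain ⟨xm, hxm, hxmmin⟩ :=
    isCompact_Icc.exists_isMinOn (nonempty_Icc.mpr hT1) hcont.continuousOn
  obtain ⟨xM, hxM, hxMmax⟩ :=
    isCompact_Icc.exists_isMaxOn (nonempty_Icc.mpr hT1) hcont.continuousOn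
  obtain ⟨xgm, hxgm, hgmmin⟩ := isCompact_Icc.exists_isMinOn (nonempty_Icc.mpr hT1) hgc
  obtain ⟨xgM, hxgM, hgMmax⟩ := isCompact_Icc.exists_isMaxOn (nonempty_Icc.mpr hT1) hgc
  have hm0 : 0 < Ai xm := hpos xm hxm.1
  have hM0 : 0 < Ai xM := hpos xM hxM.1
  have hgmv0 : 0 < gfun xgm := gfun_pos (by linarith [hxgm.1])
  have hgMv0 : 0 < gfun xgM := gfun_pos (by linarith [hxgM.1])
  set aa : ℝ := min (1/(2*sp)) (Ai xm / gfun xgM) with haadef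
  set bb : ℝ := max (3/(2*sp)) (Ai xM / gfun xgm) with hbbdef
  have haa0 : 0 < aa := lt_min (by positivity) (div_pos hm0 hgMv0)
  have hbb0 : 0 < bb := lt_of_lt_of_le (by positivity) (le_max_left _ _)
  have haaR : aa ≤ Ai xm / gfun xgM := min_le_right _ _
  have haaL : aa ≤ 1/(2*sp) := min_le_left _ _
  have hbbR : Ai xM / gfun xgm ≤ bb := le_max_right _ _
  have hbbL : 3/(2*sp) ≤ bb := le_max_left _ _
  clear_value aa bb
  have hgband : ∀ x : ℝ, 1 ≤ x → aa * gfun x ≤ Ai x ∧ Ai x ≤ bb * gfun x := by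
    intro x hx
    have hg0 : 0 < gfun x := gfun_pos (by linarith)
    rcases le_total x T with h | h
    · have hxI : x ∈ Icc (1:ℝ) T := ⟨hx, h⟩
      constructor
      · calc aa * gfun x ≤ (Ai xm / gfun xgM) * gfun x :=
              mul_le_mul_of_nonneg_right haaR hg0.le
        _ ≤ (Ai xm / gfun xgM) * gfun xgM :=
              mul_le_mul_of_nonneg_left ((isMaxOn_iff.mp hgMmax) x hxI)
                (div_nonneg hm0.le hgMv0.le)
        _ = Ai xm := div_mul_cancel₀ _ (ne_of_gt hgMv0)
        _ ≤ Ai x := (isMinOn_iff.mp hxmmin) x hxI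
      · calc Ai x ≤ Ai xM := (isMaxOn_iff.mp hxMmax) x hxI
        _ = (Ai xM / gfun xgm) * gfun xgm := (div_mul_cancel₀ _ (ne_of_gt hgmv0)).symm
        _ ≤ (Ai xM / gfun xgm) * gfun x :=
              mul_le_mul_of_nonneg_left ((isMinOn_iff.mp hgmmin) x hxI)
                (div_nonneg hM0.le hgmv0.le)
        _ ≤ bb * gfun x := mul_le_mul_of_nonneg_right hbbR hg0.le
    · have hb := hband x h
      exact ⟨le_trans (mul_le_mul_of_nonneg_right haaL hg0.le) hb.1,
        le_trans hb.2 (mul_le_mul_of_nonneg_right hbbL hg0.le)⟩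
  -- main kernel estimate
  set q : ℝ := ((2:ℝ) ^ ((1:ℝ)/4))⁻¹ with hqdef
  have hq0 : 0 < q := by
    rw [hqdef]
    exact inv_pos.mpr (Real.rpow_pos_of_pos two_pos _)
  clear_value q
  set A2 : ℝ := aa^2 * q^2 * Real.exp (-1) / 2 with hA2def
  set B2 : ℝ := (3/2) * bb^2 with hB2def
  have hA20 : 0 < A2 := by
    rw [hA2def]
    exact div_pos (mul_pos (mul_pos (pow_pos haa0 2) (pow_pos hq0 2)) (Real.exp_pos _))
      two_pos
  have hB20 : 0 < B2 := by
    rw [hB2def]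
    exact mul_pos (by norm_num) (pow_pos hbb0 2)
  clear_value A2 B2
  have key : ∀ s t : ℝ, 1 ≤ s → 1 ≤ t →
      A2 * ((s*t) ^ (-(1:ℝ)/4) * Real.exp (-(2/3) * (s ^ ((3:ℝ)/2) + t ^ ((3:ℝ)/2)))
        / (Real.sqrt s + Real.sqrt t)) ≤ KAi s t ∧
      KAi s t ≤ B2 * ((s*t) ^ (-(1:ℝ)/4) * Real.exp (-(2/3) * (s ^ ((3:ℝ)/2) + t ^ ((3:ℝ)/2)))
        / (Real.sqrt s + Real.sqrt t)) := by
    intro s t hs ht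
    have hs0 : (0:ℝ) < s := by linarith
    have ht0' : (0:ℝ) < t := by linarith
    have hss : 1 ≤ Real.sqrt s := by
      rw [show (1:ℝ) = Real.sqrt 1 by simp]; exact Real.sqrt_le_sqrt hs
    have hts : 1 ≤ Real.sqrt t := by
      rw [show (1:ℝ) = Real.sqrt 1 by simp]; exact Real.sqrt_le_sqrt ht
    set σ : ℝ := Real.sqrt s + Real.sqrt t with hσdef
    have hσ2 : 2 ≤ σ := by rw [hσdef]; linarith
    have hσ0 : 0 < σ := by linarith
    clear_value σ
    set D : ℝ := (s*t) ^ (-(1:ℝ)/4) * Real.exp (-(2/3) * (s ^ ((3:ℝ)/2) + t ^ ((3:ℝ)/2)))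
      with hDdef
    have hexps : Real.exp (-(2/3) * (s ^ ((3:ℝ)/2) + t ^ ((3:ℝ)/2)))
        = Real.exp (-((2/3) * s ^ ((3:ℝ)/2))) * Real.exp (-((2/3) * t ^ ((3:ℝ)/2))) := by
      rw [← Real.exp_add]; congr 1; ring
    have hpow4 : (s*t) ^ (-(1:ℝ)/4) = (s ^ ((1:ℝ)/4))⁻¹ * (t ^ ((1:ℝ)/4))⁻¹ := by
      rw [show (-(1:ℝ)/4) = -((1:ℝ)/4) by norm_num, Real.rpow_neg (by positivity),
        Real.mul_rpow hs0.le ht0'.le, mul_inv]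
    have hD : D = gfun s * gfun t := by
      unfold gfun; rw [hDdef, hpow4, hexps]; ring
    have hDpos : 0 < D := by
      rw [hD]; exact mul_pos (gfun_pos hs0) (gfun_pos ht0')
    clear_value D
    have hfc : Continuous (fun r : ℝ => Ai (s+r) * Ai (t+r)) :=
      (hcont.comp (continuous_const.add continuous_id)).mul
        (hcont.comp (continuous_const.add continuous_id))
    have hfpos : ∀ r : ℝ, 0 ≤ r → 0 < Ai (s+r) * Ai (t+r) := fun r hr =>
      mul_pos (hpos _ (by linarith)) (hpos _ (by linarith))
    -- pointwise upper bound
    have hup : ∀ r : ℝ, 0 ≤ r →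
        Ai (s+r) * Ai (t+r) ≤ bb^2 * D * Real.exp (-((2/3) * σ * r)) := by
      intro r hr
      have h1 : Ai (s+r) ≤ bb * (gfun s * Real.exp (-((2/3) * (Real.sqrt s * r)))) :=
        le_trans (hgband _ (by linarith)).2
          (mul_le_mul_of_nonneg_left (gfun_upper hs hr) hbb0.le)
      have h2 : Ai (t+r) ≤ bb * (gfun t * Real.exp (-((2/3) * (Real.sqrt t * r)))) :=
        le_trans (hgband _ (by linarith)).2
          (mul_le_mul_of_nonneg_left (gfun_upper ht hr) hbb0.le)
      have hmul : Ai (s+r) * Ai (t+r)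
          ≤ (bb * (gfun s * Real.exp (-((2/3) * (Real.sqrt s * r)))))
            * (bb * (gfun t * Real.exp (-((2/3) * (Real.sqrt t * r))))) :=
        mul_le_mul h1 h2 (hpos _ (by linarith)).le
          (mul_nonneg hbb0.le (mul_nonneg (gfun_pos hs0).le (Real.exp_pos _).le))
      have hee : Real.exp (-((2/3) * (Real.sqrt s * r))) * Real.exp (-((2/3) * (Real.sqrt t * r)))
          = Real.exp (-((2/3) * σ * r)) := by
        rw [← Real.exp_add]; congr 1; rw [hσdef]; ring
      calc Ai (s+r) * Ai (t+r) ≤ _ := hmul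
      _ = bb^2 * (gfun s * gfun t)
            * (Real.exp (-((2/3) * (Real.sqrt s * r))) * Real.exp (-((2/3) * (Real.sqrt t * r)))) := by
          ring
      _ = bb^2 * D * Real.exp (-((2/3) * σ * r)) := by rw [hee, hD]
    -- integrability
    have hgi : IntegrableOn (fun r : ℝ => bb^2 * D * Real.exp (-((2/3) * σ * r))) (Ioi (0:ℝ)) := by
      have hbase : IntegrableOn (fun r : ℝ => Real.exp (-((2/3) * σ) * r)) (Ioi (0:ℝ)) :=
        exp_neg_integrableOn_Ioi 0 (by linarith : (0:ℝ) < (2/3) * σ)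
      have hbase' : IntegrableOn (fun r : ℝ => Real.exp (-((2/3) * σ * r))) (Ioi (0:ℝ)) := by
        simpa [neg_mul] using hbase
      exact hbase'.const_mul _
    have hfi : IntegrableOn (fun r : ℝ => Ai (s+r) * Ai (t+r)) (Ioi (0:ℝ)) := by
      apply Integrable.mono' hgi hfc.aestronglyMeasurable.restrict
      filter_upwards [ae_restrict_mem measurableSet_Ioi] with r hr
      rw [Real.norm_eq_abs, abs_of_nonneg (hfpos r (le_of_lt hr)).le]
      exact hup r (le_of_lt hr)
    -- value of the exponential integral
    have hIexp : (∫ r in Ioi (0:ℝ), Real.exp (-((2/3) * σ * r))) = ((2/3) * σ)⁻¹ := by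
      have h := integral_comp_mul_left_Ioi (fun x => Real.exp (-x)) 0
        (by linarith : (0:ℝ) < (2/3) * σ)
      simp only [mul_zero] at h
      rw [integral_exp_neg_Ioi] at h
      simpa using h
    -- upper bound on the kernel
    have hKup : KAi s t ≤ B2 * (D / σ) := by
      rw [hKAi]
      calc (∫ r in Ioi (0:ℝ), Ai (s+r) * Ai (t+r))
          ≤ ∫ r in Ioi (0:ℝ), bb^2 * D * Real.exp (-((2/3) * σ * r)) :=
            setIntegral_mono_on hfi hgi measurableSet_Ioi (fun r hr => hup r (le_of_lt hr))
      _ = bb^2 * D * ((2/3) * σ)⁻¹ := by rw [MeasureTheory.integral_const_mul, hIexp]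
      _ = B2 * (D / σ) := by rw [hB2def]; field_simp [hσ0.ne']
    -- lower bound
    set u : ℝ := (σ + 2)⁻¹ with hudef
    have hu0 : 0 < u := by rw [hudef]; exact inv_pos.mpr (by linarith)
    have hu1 : u ≤ 1 := by
      rw [hudef]; exact inv_le_one_of_one_le₀ (by linarith)
    clear_value u
    have hlowpt : ∀ r ∈ Ioc (0:ℝ) u,
        aa^2 * q^2 * Real.exp (-1) * D ≤ Ai (s+r) * Ai (t+r) := by
      intro r hr
      obtain ⟨hr0, hru⟩ := hr
      have hr1 : r ≤ 1 := le_trans hru hu1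
      have h1 : q * gfun s * Real.exp (-((Real.sqrt s + 1) * r)) ≤ gfun (s+r) := by
        rw [hqdef]; exact gfun_lower hs hr0.le hr1
      have h2 : q * gfun t * Real.exp (-((Real.sqrt t + 1) * r)) ≤ gfun (t+r) := by
        rw [hqdef]; exact gfun_lower ht hr0.le hr1
      have hprod : (q * gfun s * Real.exp (-((Real.sqrt s + 1) * r)))
            * (q * gfun t * Real.exp (-((Real.sqrt t + 1) * r)))
          ≤ gfun (s+r) * gfun (t+r) :=
        mul_le_mul h1 h2
          (mul_nonneg (mul_nonneg hq0.le (gfun_pos ht0').le) (Real.exp_pos _).le)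
          (gfun_pos (by linarith)).le
      have hee : Real.exp (-((Real.sqrt s + 1) * r)) * Real.exp (-((Real.sqrt t + 1) * r))
          = Real.exp (-((σ + 2) * r)) := by
        rw [← Real.exp_add]; congr 1; rw [hσdef]; ring
      have hexp1 : Real.exp (-1) ≤ Real.exp (-((σ + 2) * r)) := by
        apply Real.exp_le_exp.mpr
        have h3 : (σ + 2) * r ≤ (σ + 2) * u := mul_le_mul_of_nonneg_left hru (by linarith)
        have h4 : (σ + 2) * u = 1 := by
          rw [hudef]; exact mul_inv_cancel₀ (by linarith)
        linarith
      have hA1 : aa * gfun (s+r) ≤ Ai (s+r) := (hgband _ (by linarith)).1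
      have hA2' : aa * gfun (t+r) ≤ Ai (t+r) := (hgband _ (by linarith)).1
      have hmulA : (aa * gfun (s+r)) * (aa * gfun (t+r)) ≤ Ai (s+r) * Ai (t+r) :=
        mul_le_mul hA1 hA2' (mul_nonneg haa0.le (gfun_pos (by linarith)).le)
          (hpos _ (by linarith)).le
      calc aa^2 * q^2 * Real.exp (-1) * D
          ≤ aa^2 * q^2 * Real.exp (-((σ + 2) * r)) * D := by
            apply mul_le_mul_of_nonneg_right _ hDpos.le
            exact mul_le_mul_of_nonneg_left hexp1
              (mul_nonneg (pow_nonneg haa0.le 2) (pow_nonneg hq0.le 2))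
      _ = aa^2 * ((q * gfun s * Real.exp (-((Real.sqrt s + 1) * r)))
            * (q * gfun t * Real.exp (-((Real.sqrt t + 1) * r)))) := by
          rw [hD, ← hee]; ring
      _ ≤ aa^2 * (gfun (s+r) * gfun (t+r)) :=
          mul_le_mul_of_nonneg_left hprod (pow_nonneg haa0.le 2)
      _ = (aa * gfun (s+r)) * (aa * gfun (t+r)) := by ring
      _ ≤ Ai (s+r) * Ai (t+r) := hmulA
    have hIconst : (∫ _ in Ioc (0:ℝ) u, (aa^2 * q^2 * Real.exp (-1) * D))
        = u * (aa^2 * q^2 * Real.exp (-1) * D) := by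
      rw [setIntegral_const, measureReal_def, Real.volume_Ioc, ENNReal.toReal_ofReal (by linarith : (0:ℝ) ≤ u - 0)]
      simp [smul_eq_mul]
    have hKlow : A2 * (D / σ) ≤ KAi s t := by
      rw [hKAi]
      have h2σ : (2*σ)⁻¹ ≤ u := by
        rw [hudef]
        exact inv_anti₀ (by linarith) (by linarith)
      calc A2 * (D / σ) = (2*σ)⁻¹ * (aa^2 * q^2 * Real.exp (-1) * D) := by
            rw [hA2def]; field_simp [hσ0.ne']
      _ ≤ u * (aa^2 * q^2 * Real.exp (-1) * D) :=
          mul_le_mul_of_nonneg_right h2σ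
            (mul_nonneg (mul_nonneg (mul_nonneg (pow_nonneg haa0.le 2)
              (pow_nonneg hq0.le 2)) (Real.exp_pos _).le) hDpos.le)
      _ = ∫ _ in Ioc (0:ℝ) u, (aa^2 * q^2 * Real.exp (-1) * D) := hIconst.symm
      _ ≤ ∫ r in Ioc (0:ℝ) u, Ai (s+r) * Ai (t+r) := by
          apply setIntegral_mono_on
            ((integrableOn_const_iff (by finiteness)).mpr (Or.inr measure_Ioc_lt_top))
            (hfi.mono_set Ioc_subset_Ioi_self) measurableSet_Ioc
          exact hlowpt
      _ ≤ ∫ r in Ioi (0:ℝ), Ai (s+r) * Ai (t+r) := by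
          apply setIntegral_mono_set hfi _ (HasSubset.Subset.eventuallyLE Ioc_subset_Ioi_self)
          filter_upwards [ae_restrict_mem measurableSet_Ioi] with r hr
          exact (hfpos r (le_of_lt hr)).le
    exact ⟨hKlow, hKup⟩
  -- choose the constant
  set Cv : ℝ := max B2 (1/A2) + 1 with hCvdef
  have hmax0 : 0 < max B2 (1/A2) := lt_of_lt_of_le hB20 (le_max_left _ _)
  have hC1 : 1 < Cv := by rw [hCvdef]; linarith
  have hC0 : 0 < Cv := by linarith
  have hCB : B2 ≤ Cv := by
    have := le_max_left B2 (1/A2); rw [hCvdef]; linarith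
  have hCA : 1/A2 ≤ Cv := by
    have := le_max_right B2 (1/A2); rw [hCvdef]; linarith
  have hCinvA : 1/Cv ≤ A2 := by
    have h := one_div_le_one_div_of_le (by positivity : (0:ℝ) < 1/A2) hCA
    rwa [one_div_one_div] at h
  refine ⟨Cv, hC1, ?_, ?_⟩
  · -- two-sided bound
    intro s t hs ht
    obtain ⟨hKlow, hKup⟩ := key s t hs ht
    have hs0 : (0:ℝ) < s := by linarith
    have ht0' : (0:ℝ) < t := by linarith
    have hσpos : (0:ℝ) < Real.sqrt s + Real.sqrt t := by
      have := Real.sqrt_pos.mpr hs0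
      have := Real.sqrt_pos.mpr ht0'
      linarith
    have hPpos : 0 < (s*t) ^ ((1:ℝ)/4) * (Real.sqrt s + Real.sqrt t)
        * Real.exp ((2/3) * (s ^ ((3:ℝ)/2) + t ^ ((3:ℝ)/2))) :=
      mul_pos (mul_pos (Real.rpow_pos_of_pos (mul_pos hs0 ht0') _) hσpos) (Real.exp_pos _)
    have h1 : (s*t) ^ (-(1:ℝ)/4) * (s*t) ^ ((1:ℝ)/4) = 1 := by
      rw [← Real.rpow_add (mul_pos hs0 ht0')]; norm_num
    have h2 : Real.exp (-(2/3) * (s ^ ((3:ℝ)/2) + t ^ ((3:ℝ)/2)))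
        * Real.exp ((2/3) * (s ^ ((3:ℝ)/2) + t ^ ((3:ℝ)/2))) = 1 := by
      rw [← Real.exp_add,
        show -(2/3) * (s ^ ((3:ℝ)/2) + t ^ ((3:ℝ)/2))
          + (2/3) * (s ^ ((3:ℝ)/2) + t ^ ((3:ℝ)/2)) = 0 by ring, Real.exp_zero]
    have hmulid : ((s*t) ^ (-(1:ℝ)/4) * Real.exp (-(2/3) * (s ^ ((3:ℝ)/2) + t ^ ((3:ℝ)/2)))
          / (Real.sqrt s + Real.sqrt t))
        * ((s*t) ^ ((1:ℝ)/4) * (Real.sqrt s + Real.sqrt t)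
          * Real.exp ((2/3) * (s ^ ((3:ℝ)/2) + t ^ ((3:ℝ)/2)))) = 1 := by
      rw [show ((s*t) ^ (-(1:ℝ)/4) * Real.exp (-(2/3) * (s ^ ((3:ℝ)/2) + t ^ ((3:ℝ)/2)))
          / (Real.sqrt s + Real.sqrt t))
        * ((s*t) ^ ((1:ℝ)/4) * (Real.sqrt s + Real.sqrt t)
          * Real.exp ((2/3) * (s ^ ((3:ℝ)/2) + t ^ ((3:ℝ)/2))))
        = ((s*t) ^ (-(1:ℝ)/4) * (s*t) ^ ((1:ℝ)/4))
          * (Real.exp (-(2/3) * (s ^ ((3:ℝ)/2) + t ^ ((3:ℝ)/2)))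
            * Real.exp ((2/3) * (s ^ ((3:ℝ)/2) + t ^ ((3:ℝ)/2))))
          * ((Real.sqrt s + Real.sqrt t) / (Real.sqrt s + Real.sqrt t)) by ring,
        h1, h2, div_self (ne_of_gt hσpos)]
      norm_num
    have hre : KAi s t * (s * t) ^ ((1:ℝ)/4) * (Real.sqrt s + Real.sqrt t)
          * Real.exp ((2/3) * (s ^ ((3:ℝ)/2) + t ^ ((3:ℝ)/2)))
        = KAi s t * ((s*t) ^ ((1:ℝ)/4) * (Real.sqrt s + Real.sqrt t)
          * Real.exp ((2/3) * (s ^ ((3:ℝ)/2) + t ^ ((3:ℝ)/2)))) := by ring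
    have hxlow : A2 * ((s*t) ^ (-(1:ℝ)/4) * Real.exp (-(2/3) * (s ^ ((3:ℝ)/2) + t ^ ((3:ℝ)/2)))
          / (Real.sqrt s + Real.sqrt t))
        * ((s*t) ^ ((1:ℝ)/4) * (Real.sqrt s + Real.sqrt t)
          * Real.exp ((2/3) * (s ^ ((3:ℝ)/2) + t ^ ((3:ℝ)/2)))) = A2 := by
      rw [mul_assoc, hmulid, mul_one]
    have hxup : B2 * ((s*t) ^ (-(1:ℝ)/4) * Real.exp (-(2/3) * (s ^ ((3:ℝ)/2) + t ^ ((3:ℝ)/2)))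
          / (Real.sqrt s + Real.sqrt t))
        * ((s*t) ^ ((1:ℝ)/4) * (Real.sqrt s + Real.sqrt t)
          * Real.exp ((2/3) * (s ^ ((3:ℝ)/2) + t ^ ((3:ℝ)/2)))) = B2 := by
      rw [mul_assoc, hmulid, mul_one]
    constructor
    · have hmm := mul_le_mul_of_nonneg_right hKlow hPpos.le
      rw [hre]
      exact le_trans hCinvA (le_trans (le_of_eq hxlow.symm) hmm)
    · have hmm := mul_le_mul_of_nonneg_right hKup hPpos.le
      rw [hre]
      exact le_trans hmm (le_trans (le_of_eq hxup) hCB)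
  · -- consequence on [1, N^ε]
    intro ε hε N hN s t hsI htI
    have hs := hsI.1
    have ht := htI.1
    obtain ⟨hKlow, _⟩ := key s t hs ht
    have hs0 : (0:ℝ) < s := by linarith
    have ht0' : (0:ℝ) < t := by linarith
    have hσpos : (0:ℝ) < Real.sqrt s + Real.sqrt t := by
      have := Real.sqrt_pos.mpr hs0
      have := Real.sqrt_pos.mpr ht0'
      linarith
    have hNpos : (0:ℝ) < (N:ℝ) := by exact_mod_cast Nat.lt_of_lt_of_le Nat.zero_lt_one hN
    have hNh : (0:ℝ) < (N:ℝ) ^ (ε/2) := Real.rpow_pos_of_pos hNpos _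
    have hsqrtNe : Real.sqrt ((N:ℝ) ^ ε) = (N:ℝ) ^ (ε/2) := by
      rw [Real.sqrt_eq_rpow, ← Real.rpow_mul (Nat.cast_nonneg N)]
      congr 1
      ring
    have hσN : Real.sqrt s + Real.sqrt t ≤ 2 * (N:ℝ) ^ (ε/2) := by
      have h1 : Real.sqrt s ≤ (N:ℝ) ^ (ε/2) := by
        rw [← hsqrtNe]; exact Real.sqrt_le_sqrt hsI.2
      have h2 : Real.sqrt t ≤ (N:ℝ) ^ (ε/2) := by
        rw [← hsqrtNe]; exact Real.sqrt_le_sqrt htI.2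
      linarith
    have hNneg : (N:ℝ) ^ (-ε/2) = ((N:ℝ) ^ (ε/2))⁻¹ := by
      rw [show -ε/2 = -(ε/2) by ring, Real.rpow_neg (Nat.cast_nonneg N)]
    have hDDpos : 0 < (s*t) ^ (-(1:ℝ)/4)
        * Real.exp (-(2/3) * (s ^ ((3:ℝ)/2) + t ^ ((3:ℝ)/2))) :=
      mul_pos (Real.rpow_pos_of_pos (mul_pos hs0 ht0') _) (Real.exp_pos _)
    have hfinal : Cv⁻¹ * (N:ℝ) ^ (-ε/2) / 2 ≤ A2 / (Real.sqrt s + Real.sqrt t) := by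
      rw [hNneg]
      calc Cv⁻¹ * ((N:ℝ) ^ (ε/2))⁻¹ / 2 = Cv⁻¹ / (2 * (N:ℝ) ^ (ε/2)) := by
            field_simp
      _ ≤ A2 / (2 * (N:ℝ) ^ (ε/2)) := by
            rw [div_le_div_iff_of_pos_right (mul_pos two_pos hNh), ← one_div]
            exact hCinvA
      _ ≤ A2 / (Real.sqrt s + Real.sqrt t) :=
            div_le_div_of_nonneg_left hA20.le hσpos hσN
    have hgoal : Cv⁻¹ * (N:ℝ) ^ (-ε/2) * (s * t) ^ (-(1:ℝ)/4)
          * Real.exp (-(2/3) * (s ^ ((3:ℝ)/2) + t ^ ((3:ℝ)/2))) / 2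
        = (Cv⁻¹ * (N:ℝ) ^ (-ε/2) / 2) * ((s*t) ^ (-(1:ℝ)/4)
          * Real.exp (-(2/3) * (s ^ ((3:ℝ)/2) + t ^ ((3:ℝ)/2)))) := by ring
    rw [hgoal]
    calc (Cv⁻¹ * (N:ℝ) ^ (-ε/2) / 2) * ((s*t) ^ (-(1:ℝ)/4)
          * Real.exp (-(2/3) * (s ^ ((3:ℝ)/2) + t ^ ((3:ℝ)/2))))
        ≤ (A2 / (Real.sqrt s + Real.sqrt t)) * ((s*t) ^ (-(1:ℝ)/4)
          * Real.exp (-(2/3) * (s ^ ((3:ℝ)/2) + t ^ ((3:ℝ)/2)))) :=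
          mul_le_mul_of_nonneg_right hfinal hDDpos.le
    _ = A2 * ((s*t) ^ (-(1:ℝ)/4)
          * Real.exp (-(2/3) * (s ^ ((3:ℝ)/2) + t ^ ((3:ℝ)/2)))
          / (Real.sqrt s + Real.sqrt t)) := by ring
    _ ≤ KAi s t := hKlow
end
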